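/- arXiv:1709.06789 — 2 statements merged into one kernel-verified Lean document; each statement's English description precedes it below -/
import Mathlib

section
/- With K₀ and ≤ as above: if A, B, C ∈ K₀, A ≤ B, and C is a substructure (subset with induced structure) of B, then A ∩ C ≤ C. -/
open scoped Classical

/-- A simple matroid of rank ≤ 3 presented as a 3-hypergraph `(V, R)`:
`R` is irreflexive, symmetric, and satisfies the exchange axiom
(if `R a b c` and `R a b d` then `{a,b,c,d}` is an `R`-clique). -/
structure PlaneGeom (V : Type) where
  R : V → V → V → Prop
  irrefl : ∀ a b c, R a b c → a ≠ b ∧ b ≠ c ∧ a ≠ c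
  symm₁ : ∀ a b c, R a b c → R b a c
  symm₂ : ∀ a b c, R a b c → R a c b
  exchange : ∀ a b c d, R a b c → R a b d → c ≠ d → R a c d

/-- A line `ℓ` is based in `B` if it contains at least two points of `B`. -/
def BasedIn {V : Type} [DecidableEq V] (ℓ B : Finset V) : Prop := 2 ≤ (ℓ ∩ B).card

namespace PlaneGeom

variable {V : Type} [Fintype V] [DecidableEq V] (G : PlaneGeom V)

/-- A set of pairwise collinear points. -/
def IsClique (s : Finset V) : Prop :=
  ∀ a ∈ s, ∀ b ∈ s, ∀ c ∈ s, a ≠ b → b ≠ c → a ≠ c → G.R a b c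

/-- A (nontrivial) line of the submatroid induced on `X`: a maximal
`R`-clique in `X` of size at least 3. -/
def IsLine (X ℓ : Finset V) : Prop :=
  ℓ ⊆ X ∧ 3 ≤ ℓ.card ∧ G.IsClique ℓ ∧
    ∀ p ∈ X, p ∉ ℓ → ¬ G.IsClique (insert p ℓ)

/-- The set of nontrivial lines of the submatroid induced on `X`. -/
noncomputable def lines (X : Finset V) : Finset (Finset V) :=
  Finset.univ.filter (fun ℓ => G.IsLine X ℓ)

/-- The predimension function `δ(X) = |X| - Σ_{ℓ ∈ L(X)} (|ℓ| - 2)`. -/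
noncomputable def delta (X : Finset V) : ℤ :=
  (X.card : ℤ) - ∑ ℓ ∈ G.lines X, ((ℓ.card : ℤ) - 2)

/-- `A ≤ B` : `A` is a strong substructure of `B`. -/
def Strong (A B : Finset V) : Prop :=
  A ⊆ B ∧ ∀ X : Finset V, A ⊆ X → X ⊆ B → G.delta A ≤ G.delta X

/-- Membership in the class `K₀`: hereditarily nonnegative `δ`. -/
def InK0 (A : Finset V) : Prop := ∀ A' ⊆ A, 0 ≤ G.delta A'

/-- `B` is a primitive strong extension of `A`. -/
def Primitive (A B : Finset V) : Prop :=
  G.Strong A B ∧ A ≠ B ∧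
    ∀ B₀ : Finset V, A ⊆ B₀ → B₀ ⊆ B → G.Strong A B₀ → G.Strong B₀ B →
      B₀ = A ∨ B₀ = B

end PlaneGeom

namespace PlaneGeom

variable {V : Type} [Fintype V] [DecidableEq V] (G : PlaneGeom V)

lemma clique_subset {s t : Finset V} (h : G.IsClique t) (hst : s ⊆ t) : G.IsClique s :=
  fun a ha b hb c hc hab hbc hac => h a (hst ha) b (hst hb) c (hst hc) hab hbc hac

lemma clique_pair {a b : V} : G.IsClique {a, b} := by
  intro x hx y hy z hz hxy hyz hxz
  simp only [Finset.mem_insert, Finset.mem_singleton] at hx hy hz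
  rcases hx with rfl | rfl <;> rcases hy with rfl | rfl <;> rcases hz with rfl | rfl <;>
    simp_all

lemma clique_insert {s : Finset V} (h : G.IsClique s) {a b c : V}
    (ha : a ∈ s) (hb : b ∈ s) (hab : a ≠ b) (hR : G.R a b c) (hcs : c ∉ s) :
    G.IsClique (insert c s) := by
  have key : ∀ x ∈ s, ∀ y ∈ s, x ≠ y → G.R c x y := by
    have F1 : G.R c a b := G.symm₁ _ _ _ (G.symm₂ _ _ _ hR)
    have F2 : ∀ x ∈ s, x ≠ a → x ≠ b → G.R c a x ∧ G.R c b x := by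
      intro x hx hxa hxb
      have h1 : G.R a b x := h a ha b hb x hx hab (Ne.symm hxb) (Ne.symm hxa)
      have hcx : c ≠ x := fun e => hcs (e ▸ hx)
      exact ⟨G.symm₁ _ _ _ (G.exchange a b c x hR h1 hcx),
        G.symm₁ _ _ _ (G.exchange b a c x (G.symm₁ _ _ _ hR) (G.symm₁ _ _ _ h1) hcx)⟩
    intro x hx y hy hxy
    rcases eq_or_ne x a with rfl | hxa
    · rcases eq_or_ne y b with rfl | hyb
      · exact F1
      · exact (F2 y hy (Ne.symm hxy) hyb).1
    · rcases eq_or_ne x b with rfl | hxb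
      · rcases eq_or_ne y a with rfl | hya
        · exact G.symm₂ _ _ _ F1
        · exact (F2 y hy hya (Ne.symm hxy)).2
      · rcases eq_or_ne y a with rfl | hya
        · exact G.symm₂ _ _ _ (F2 x hx hxa hxb).1
        · rcases eq_or_ne y b with rfl | hyb
          · exact G.symm₂ _ _ _ (F2 x hx hxa hxb).2
          · exact G.exchange c a x y (F2 x hx hxa hxb).1 (F2 y hy hya hyb).1 hxy
  intro x hx y hy z hz hxy hyz hxz
  simp only [Finset.mem_insert] at hx hy hz
  rcases hx with rfl | hx
  · rcases hy with rfl | hy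
    · exact absurd rfl hxy
    rcases hz with rfl | hz
    · exact absurd rfl hxz
    exact key y hy z hz hyz
  · rcases hy with rfl | hy
    · rcases hz with rfl | hz
      · exact absurd rfl hyz
      exact G.symm₁ _ _ _ (key x hx z hz hxz)
    · rcases hz with rfl | hz
      · exact G.symm₂ _ _ _ (G.symm₁ _ _ _ (key x hx y hy hxy))
      · exact h x hx y hy z hz hxy hyz hxz

/-- The set of points of `Y` collinear with the pair `a, b` (including `a, b`). -/
noncomputable def lineThrough (Y : Finset V) (a b : V) : Finset V :=
  Y.filter (fun c => c = a ∨ c = b ∨ G.R a b c)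

lemma mem_lineThrough {Y : Finset V} {a b c : V} :
    c ∈ G.lineThrough Y a b ↔ c ∈ Y ∧ (c = a ∨ c = b ∨ G.R a b c) := by
  simp [lineThrough]

lemma clique_pair_union {a b : V} (hab : a ≠ b) (s : Finset V)
    (hs : ∀ c ∈ s, G.R a b c) : G.IsClique ({a, b} ∪ s) := by
  classical
  induction s using Finset.induction_on with
  | empty => simpa using G.clique_pair
  | @insert c s' hc ih =>
    have hR := hs c (Finset.mem_insert_self c s')
    obtain ⟨-, hbc, hac⟩ := G.irrefl a b c hR
    have hc' : c ∉ ({a, b} : Finset V) ∪ s' := by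
      simp only [Finset.mem_union, Finset.mem_insert, Finset.mem_singleton]
      push_neg
      exact ⟨⟨Ne.symm hac, Ne.symm hbc⟩, hc⟩
    rw [Finset.union_insert]
    exact G.clique_insert (ih fun d hd => hs d (Finset.mem_insert_of_mem hd))
      (by simp) (by simp) hab hR hc'

lemma lineThrough_clique {Y : Finset V} {a b : V} (ha : a ∈ Y) (hb : b ∈ Y)
    (hab : a ≠ b) : G.IsClique (G.lineThrough Y a b) := by
  have heq : G.lineThrough Y a b = {a, b} ∪ Y.filter (fun c => G.R a b c) := by
    ext c
    simp only [mem_lineThrough, Finset.mem_union, Finset.mem_insert,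
      Finset.mem_singleton, Finset.mem_filter]
    constructor
    · rintro ⟨hcY, rfl | rfl | h⟩
      · exact Or.inl (Or.inl rfl)
      · exact Or.inl (Or.inr rfl)
      · exact Or.inr ⟨hcY, h⟩
    · rintro ((rfl | rfl) | ⟨hcY, h⟩)
      · exact ⟨ha, Or.inl rfl⟩
      · exact ⟨hb, Or.inr (Or.inl rfl)⟩
      · exact ⟨hcY, Or.inr (Or.inr h)⟩
  rw [heq]
  exact G.clique_pair_union hab _ fun c hc => (Finset.mem_filter.1 hc).2

lemma lineThrough_isLine {Y : Finset V} {a b c : V} (ha : a ∈ Y) (hb : b ∈ Y)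
    (hc : c ∈ Y) (hR : G.R a b c) : G.IsLine Y (G.lineThrough Y a b) := by
  obtain ⟨hab, hbc, hac⟩ := G.irrefl a b c hR
  have haL : a ∈ G.lineThrough Y a b := G.mem_lineThrough.2 ⟨ha, Or.inl rfl⟩
  have hbL : b ∈ G.lineThrough Y a b := G.mem_lineThrough.2 ⟨hb, Or.inr (Or.inl rfl)⟩
  have hcL : c ∈ G.lineThrough Y a b := G.mem_lineThrough.2 ⟨hc, Or.inr (Or.inr hR)⟩
  refine ⟨Finset.filter_subset _ _, ?_, G.lineThrough_clique ha hb hab, ?_⟩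
  · have hsub : ({a, b, c} : Finset V) ⊆ G.lineThrough Y a b := by
      intro x hx
      simp only [Finset.mem_insert, Finset.mem_singleton] at hx
      rcases hx with rfl | rfl | rfl <;> assumption
    have h3 : ({a, b, c} : Finset V).card = 3 :=
      Finset.card_eq_three.2 ⟨a, b, c, hab, hac, hbc, rfl⟩
    calc 3 = ({a, b, c} : Finset V).card := h3.symm
      _ ≤ _ := Finset.card_le_card hsub
  · intro p hp hpL hcl
    apply hpL
    have hpa : p ≠ a := fun e => hpL (e ▸ haL)
    have hpb : p ≠ b := fun e => hpL (e ▸ hbL)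
    have hRp : G.R a b p := hcl a (Finset.mem_insert_of_mem haL)
      b (Finset.mem_insert_of_mem hbL) p (Finset.mem_insert_self _ _)
      hab (Ne.symm hpb) (Ne.symm hpa)
    exact G.mem_lineThrough.2 ⟨hp, Or.inr (Or.inr hRp)⟩

lemma IsLine.eq_lineThrough {Y m : Finset V} (hm : G.IsLine Y m) {a b : V}
    (ha : a ∈ m) (hb : b ∈ m) (hab : a ≠ b) : m = G.lineThrough Y a b := by
  obtain ⟨hmY, hcard, hclq, hmax⟩ := hm
  apply Finset.Subset.antisymm
  · intro c hc
    refine G.mem_lineThrough.2 ⟨hmY hc, ?_⟩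
    rcases eq_or_ne c a with rfl | hca
    · exact Or.inl rfl
    rcases eq_or_ne c b with rfl | hcb
    · exact Or.inr (Or.inl rfl)
    exact Or.inr (Or.inr (hclq a ha b hb c hc hab (Ne.symm hcb) (Ne.symm hca)))
  · intro c hc
    by_contra hcm
    obtain ⟨hcY, hcs⟩ := G.mem_lineThrough.1 hc
    have hR : G.R a b c := by
      rcases hcs with rfl | rfl | h
      · exact absurd ha hcm
      · exact absurd hb hcm
      · exact h
    exact hmax c hcY hcm (G.clique_insert hclq ha hb hab hR hcm)

lemma line_unique {Y m m' ℓ : Finset V} (hm : G.IsLine Y m) (hm' : G.IsLine Y m')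
    (hℓ : 2 ≤ ℓ.card) (h1 : ℓ ⊆ m) (h2 : ℓ ⊆ m') : m = m' := by
  obtain ⟨a, ha, b, hb, hab⟩ := Finset.one_lt_card.1 (by omega : 1 < ℓ.card)
  rw [IsLine.eq_lineThrough G hm (h1 ha) (h1 hb) hab,
    IsLine.eq_lineThrough G hm' (h2 ha) (h2 hb) hab]

lemma exists_line {Y ℓ : Finset V} (hclq : G.IsClique ℓ) (hsub : ℓ ⊆ Y)
    (hcard : 3 ≤ ℓ.card) : ∃ m, G.IsLine Y m ∧ ℓ ⊆ m := by
  obtain ⟨a, ha, b, hb, c, hc, hab, hac, hbc⟩ := Finset.two_lt_card.1 hcard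
  have hR : G.R a b c := hclq a ha b hb c hc hab hbc hac
  refine ⟨G.lineThrough Y a b, G.lineThrough_isLine (hsub ha) (hsub hb) (hsub hc) hR, ?_⟩
  intro x hx
  refine G.mem_lineThrough.2 ⟨hsub hx, ?_⟩
  rcases eq_or_ne x a with rfl | hxa
  · exact Or.inl rfl
  rcases eq_or_ne x b with rfl | hxb
  · exact Or.inr (Or.inl rfl)
  exact Or.inr (Or.inr (hclq a ha b hb x hx hab (Ne.symm hxb) (Ne.symm hxa)))

lemma inter_line {Y Z m : Finset V} (hm : G.IsLine Y m) (hZY : Z ⊆ Y)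
    (hcard : 3 ≤ (m ∩ Z).card) : G.IsLine Z (m ∩ Z) := by
  refine ⟨Finset.inter_subset_right, hcard,
    G.clique_subset hm.2.2.1 Finset.inter_subset_left, ?_⟩
  intro p hp hpm hcl
  obtain ⟨a, ha, b, hb, hab⟩ := Finset.one_lt_card.1 (by omega : 1 < (m ∩ Z).card)
  have hpa : p ≠ a := fun e => hpm (e ▸ ha)
  have hpb : p ≠ b := fun e => hpm (e ▸ hb)
  have hR : G.R a b p := hcl a (Finset.mem_insert_of_mem ha)
    b (Finset.mem_insert_of_mem hb) p (Finset.mem_insert_self _ _)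
    hab (Ne.symm hpb) (Ne.symm hpa)
  have hpm' : p ∉ m := fun h => hpm (Finset.mem_inter.2 ⟨h, hp⟩)
  exact hm.2.2.2 p (hZY hp) hpm'
    (G.clique_insert hm.2.2.1 (Finset.mem_inter.1 ha).1 (Finset.mem_inter.1 hb).1
      hab hR hpm')

lemma line_eq_inter {Y Z m ℓ : Finset V} (hm : G.IsLine Y m) (hℓ : G.IsLine Z ℓ)
    (hsub : ℓ ⊆ m) : ℓ = m ∩ Z := by
  apply Finset.Subset.antisymm (Finset.subset_inter hsub hℓ.1)
  intro p hp
  by_contra hpℓ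
  have hpZ := (Finset.mem_inter.1 hp).2
  exact hℓ.2.2.2 p hpZ hpℓ
    (G.clique_subset hm.2.2.1 (Finset.insert_subset (Finset.mem_inter.1 hp).1 hsub))

/-- The (unique) line of `Y` extending a clique `ℓ` of size at least `3`. -/
noncomputable def extLine (Y ℓ : Finset V) : Finset V :=
  if h : G.IsClique ℓ ∧ ℓ ⊆ Y ∧ 3 ≤ ℓ.card then (G.exists_line h.1 h.2.1 h.2.2).choose
  else ∅

lemma extLine_spec {Y ℓ : Finset V} (h1 : G.IsClique ℓ) (h2 : ℓ ⊆ Y)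
    (h3 : 3 ≤ ℓ.card) : G.IsLine Y (G.extLine Y ℓ) ∧ ℓ ⊆ G.extLine Y ℓ := by
  rw [extLine, dif_pos ⟨h1, h2, h3⟩]
  exact (G.exists_line h1 h2 h3).choose_spec

lemma mem_lines {X ℓ : Finset V} : ℓ ∈ G.lines X ↔ G.IsLine X ℓ := by
  simp [lines]

lemma sum_lines_le {U S : Finset V} (hSU : S ⊆ U) :
    ∑ ℓ ∈ G.lines S, ((ℓ.card : ℤ) - 2) ≤
      ∑ m ∈ G.lines U,
        (if 3 ≤ (m ∩ S).card then ((m ∩ S).card : ℤ) - 2 else 0) := by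
  classical
  have key : ∀ ℓ ∈ G.lines S, G.IsLine U (G.extLine U ℓ) ∧ ℓ = G.extLine U ℓ ∩ S := by
    intro ℓ hℓ
    have hL : G.IsLine S ℓ := G.mem_lines.1 hℓ
    have hspec := G.extLine_spec hL.2.2.1 (hL.1.trans hSU) hL.2.1
    exact ⟨hspec.1, G.line_eq_inter hspec.1 hL hspec.2⟩
  have hinj : ∀ ℓ₁ ∈ G.lines S, ∀ ℓ₂ ∈ G.lines S,
      G.extLine U ℓ₁ = G.extLine U ℓ₂ → ℓ₁ = ℓ₂ := by
    intro ℓ₁ h1 ℓ₂ h2 he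
    rw [(key ℓ₁ h1).2, (key ℓ₂ h2).2, he]
  have himg : ∑ m ∈ (G.lines S).image (G.extLine U),
      (if 3 ≤ (m ∩ S).card then ((m ∩ S).card : ℤ) - 2 else 0) =
      ∑ ℓ ∈ G.lines S, ((ℓ.card : ℤ) - 2) := by
    rw [Finset.sum_image hinj]
    apply Finset.sum_congr rfl
    intro ℓ hℓ
    have hL : G.IsLine S ℓ := G.mem_lines.1 hℓ
    rw [← (key ℓ hℓ).2, if_pos hL.2.1]
  rw [← himg]
  apply Finset.sum_le_sum_of_subset_of_nonneg
  · intro m hm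
    obtain ⟨ℓ, hℓ, rfl⟩ := Finset.mem_image.1 hm
    exact G.mem_lines.2 (key ℓ hℓ).1
  · intro m _ _
    split_ifs with h
    · have : (3 : ℤ) ≤ ((m ∩ S).card : ℤ) := by exact_mod_cast h
      linarith
    · exact le_refl 0

lemma sum_inter_le {U I : Finset V} (hIU : I ⊆ U) :
    ∑ m ∈ G.lines U,
        (if 3 ≤ (m ∩ I).card then ((m ∩ I).card : ℤ) - 2 else 0) ≤
      ∑ n ∈ G.lines I, ((n.card : ℤ) - 2) := by
  classical
  rw [← Finset.sum_filter]
  set s := (G.lines U).filter (fun m => 3 ≤ (m ∩ I).card) with hs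
  have key : ∀ m ∈ s, G.IsLine I (m ∩ I) := by
    intro m hm
    obtain ⟨hmU, hc⟩ := Finset.mem_filter.1 hm
    exact G.inter_line (G.mem_lines.1 hmU) hIU hc
  have hinj : ∀ m₁ ∈ s, ∀ m₂ ∈ s, m₁ ∩ I = m₂ ∩ I → m₁ = m₂ := by
    intro m₁ h1 m₂ h2 he
    obtain ⟨hm1, hc1⟩ := Finset.mem_filter.1 h1
    obtain ⟨hm2, hc2⟩ := Finset.mem_filter.1 h2
    exact G.line_unique (G.mem_lines.1 hm1) (G.mem_lines.1 hm2)
      (by omega : 2 ≤ (m₁ ∩ I).card) Finset.inter_subset_left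
      (he ▸ Finset.inter_subset_left)
  have himg : ∑ m ∈ s, (((m ∩ I).card : ℤ) - 2) =
      ∑ n ∈ s.image (fun m => m ∩ I), ((n.card : ℤ) - 2) := by
    rw [Finset.sum_image hinj]
  rw [himg]
  apply Finset.sum_le_sum_of_subset_of_nonneg
  · intro n hn
    obtain ⟨m, hm, rfl⟩ := Finset.mem_image.1 hn
    exact G.mem_lines.2 (key m hm)
  · intro n hn _
    have h3 : 3 ≤ n.card := (G.mem_lines.1 hn).2.1
    have : (3 : ℤ) ≤ (n.card : ℤ) := by exact_mod_cast h3
    linarith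

lemma pointwise_ineq {A X m : Finset V} (hm3 : 3 ≤ m.card) :
    (if 3 ≤ (m ∩ A).card then ((m ∩ A).card : ℤ) - 2 else 0) +
      (if 3 ≤ (m ∩ X).card then ((m ∩ X).card : ℤ) - 2 else 0) ≤
    ((m.card : ℤ) - 2) +
      (if 3 ≤ (m ∩ (A ∩ X)).card then ((m ∩ (A ∩ X)).card : ℤ) - 2 else 0) := by
  have hA : (m ∩ A).card ≤ m.card := Finset.card_le_card Finset.inter_subset_left
  have hX : (m ∩ X).card ≤ m.card := Finset.card_le_card Finset.inter_subset_left
  have hU : ((m ∩ A) ∪ (m ∩ X)).card ≤ m.card :=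
    Finset.card_le_card
      (Finset.union_subset Finset.inter_subset_left Finset.inter_subset_left)
  have hI : (m ∩ A) ∩ (m ∩ X) = m ∩ (A ∩ X) := by
    ext x
    simp only [Finset.mem_inter]
    tauto
  have hcui := Finset.card_union_add_card_inter (m ∩ A) (m ∩ X)
  rw [hI] at hcui
  split_ifs <;> push_cast <;> omega

lemma delta_submod (A X : Finset V) :
    G.delta (A ∪ X) + G.delta (A ∩ X) ≤ G.delta A + G.delta X := by
  classical
  have hsA := G.sum_lines_le (U := A ∪ X) (S := A) Finset.subset_union_left
  have hsX := G.sum_lines_le (U := A ∪ X) (S := X) Finset.subset_union_right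
  have hsI := G.sum_inter_le (U := A ∪ X) (I := A ∩ X)
    (Finset.inter_subset_left.trans Finset.subset_union_left)
  have hpt : ∑ m ∈ G.lines (A ∪ X),
      ((if 3 ≤ (m ∩ A).card then ((m ∩ A).card : ℤ) - 2 else 0) +
        (if 3 ≤ (m ∩ X).card then ((m ∩ X).card : ℤ) - 2 else 0)) ≤
      ∑ m ∈ G.lines (A ∪ X),
      (((m.card : ℤ) - 2) +
        (if 3 ≤ (m ∩ (A ∩ X)).card then ((m ∩ (A ∩ X)).card : ℤ) - 2 else 0)) := by
    apply Finset.sum_le_sum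
    intro m hm
    exact pointwise_ineq (G.mem_lines.1 hm).2.1
  rw [Finset.sum_add_distrib, Finset.sum_add_distrib] at hpt
  have hcard := Finset.card_union_add_card_inter A X
  have hcard' : ((A ∪ X).card : ℤ) + ((A ∩ X).card : ℤ) = (A.card : ℤ) + (X.card : ℤ) := by
    exact_mod_cast hcard
  unfold delta
  linarith

end PlaneGeom

/-- if `A, B, C ∈ K₀`, `A ≤ B` and `C` is a substructure of `B`,
then `A ∩ C ≤ C`. -/
theorem stmt_5 {V : Type} [Fintype V] [DecidableEq V] (G : PlaneGeom V)
    (A B C : Finset V) (hA : G.InK0 A) (hB : G.InK0 B) (hC : G.InK0 C)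
    (hAB : G.Strong A B) (hCB : C ⊆ B) : G.Strong (A ∩ C) C := by
  obtain ⟨hABsub, hABstr⟩ := hAB
  refine ⟨Finset.inter_subset_right, ?_⟩
  intro X hX1 hX2
  have hAX : A ∩ X = A ∩ C :=
    Finset.Subset.antisymm (Finset.inter_subset_inter (Finset.Subset.refl A) hX2)
      (Finset.subset_inter Finset.inter_subset_left hX1)
  have hsub := G.delta_submod A X
  rw [hAX] at hsub
  have hAU : G.delta A ≤ G.delta (A ∪ X) :=
    hABstr (A ∪ X) Finset.subset_union_left
      (Finset.union_subset hABsub (hX2.trans hCB))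
  linarith
end

section
/- If A ≤ B are finite simple matroids of rank at most 3 in K₀ (A a strong substructure of B with respect to δ), then A is a ∧-subgeometry of B: no point of B - A lies on two distinct lines of A. -/
open scoped Classical

set_option linter.unusedSectionVars false


namespace PlaneGeom
variable {V : Type} [Fintype V] [DecidableEq V] {G : PlaneGeom V}

lemma clique_mono {s t : Finset V} (h : s ⊆ t) (ht : G.IsClique t) : G.IsClique s :=
  fun a ha b hb c hc => ht a (h ha) b (h hb) c (h hc)

lemma ext_clique {ℓ : Finset V} (hℓ : G.IsClique ℓ) {u v c : V}
    (hu : u ∈ ℓ) (hv : v ∈ ℓ) (huv : u ≠ v) (hR : G.R u v c) (hc : c ∉ ℓ) :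
    G.IsClique (insert c ℓ) := by
  have step1 : ∀ x ∈ ℓ, x ≠ u → G.R u x c := by
    intro x hx hxu
    rcases eq_or_ne x v with rfl | hxv
    · exact hR
    · have h1 : G.R u v x := hℓ u hu v hv x hx huv (Ne.symm hxv) (Ne.symm hxu)
      have hcx : c ≠ x := fun h => hc (h ▸ hx)
      exact G.symm₂ _ _ _ (G.exchange u v c x hR h1 hcx)
  have step2 : ∀ x ∈ ℓ, ∀ y ∈ ℓ, x ≠ y → G.R x y c := by
    intro x hx y hy hxy
    rcases eq_or_ne x u with rfl | hxu
    · exact step1 y hy (Ne.symm hxy)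
    rcases eq_or_ne y u with rfl | hyu
    · exact G.symm₁ _ _ _ (step1 x hx hxu)
    · have h1 : G.R x u c := G.symm₁ _ _ _ (step1 x hx hxu)
      have h2 : G.R x u y := hℓ x hx u hu y hy hxu (Ne.symm hyu) hxy
      have hcy : c ≠ y := fun h => hc (h ▸ hy)
      exact G.symm₂ _ _ _ (G.exchange x u c y h1 h2 hcy)
  intro a ha b hb d hd hab hbd had
  rcases Finset.mem_insert.mp ha with rfl | ha'
  · rcases Finset.mem_insert.mp hb with rfl | hb'
    · exact absurd rfl hab
    rcases Finset.mem_insert.mp hd with rfl | hd'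
    · exact absurd rfl had
    · exact G.symm₁ _ _ _ (G.symm₂ _ _ _ (step2 b hb' d hd' hbd))
  rcases Finset.mem_insert.mp hb with rfl | hb'
  · rcases Finset.mem_insert.mp hd with rfl | hd'
    · exact absurd rfl hbd
    · exact G.symm₂ _ _ _ (step2 a ha' d hd' had)
  rcases Finset.mem_insert.mp hd with rfl | hd'
  · exact step2 a ha' b hb' hab
  · exact hℓ a ha' b hb' d hd' hab hbd had

lemma line_inter {X ℓ₁ ℓ₂ : Finset V} (h1 : G.IsLine X ℓ₁) (h2 : G.IsLine X ℓ₂)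
    (hne : ℓ₁ ≠ ℓ₂) {a b : V} (ha1 : a ∈ ℓ₁) (ha2 : a ∈ ℓ₂) (hb1 : b ∈ ℓ₁)
    (hb2 : b ∈ ℓ₂) : a = b := by
  by_contra hab
  by_cases hsub : ℓ₂ ⊆ ℓ₁
  · obtain ⟨q, hq1, hq2⟩ := Finset.exists_of_ssubset (hsub.ssubset_of_ne (Ne.symm hne))
    exact h2.2.2.2 q (h1.1 hq1) hq2 (clique_mono (Finset.insert_subset hq1 hsub) h1.2.2.1)
  · obtain ⟨c, hc2, hc1⟩ := Finset.not_subset.mp hsub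
    have hbc : b ≠ c := fun h => hc1 (h ▸ hb1)
    have hac : a ≠ c := fun h => hc1 (h ▸ ha1)
    have hR : G.R a b c := h2.2.2.1 a ha2 b hb2 c hc2 hab hbc hac
    exact h1.2.2.2 c (h2.1 hc2) hc1 (ext_clique h1.2.2.1 ha1 hb1 hab hR hc1)

lemma exists_line_ext {X S : Finset V} (hSX : S ⊆ X) (hS : G.IsClique S)
    (h3 : 3 ≤ S.card) : ∃ ℓ, G.IsLine X ℓ ∧ S ⊆ ℓ := by
  classical
  set T := X.powerset.filter (fun t => S ⊆ t ∧ G.IsClique t) with hT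
  have hST : S ∈ T := by
    simp only [hT, Finset.mem_filter, Finset.mem_powerset]
    exact ⟨hSX, subset_rfl, hS⟩
  obtain ⟨ℓ, hℓT, hmax⟩ := T.exists_max_image Finset.card ⟨S, hST⟩
  simp only [hT, Finset.mem_filter, Finset.mem_powerset] at hℓT
  obtain ⟨hℓX, hSℓ, hℓcl⟩ := hℓT
  refine ⟨ℓ, ⟨hℓX, le_trans h3 (Finset.card_le_card hSℓ), hℓcl, ?_⟩, hSℓ⟩
  intro q hqX hqℓ hcl
  have hmem : insert q ℓ ∈ T := by
    simp only [hT, Finset.mem_filter, Finset.mem_powerset]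
    exact ⟨Finset.insert_subset hqX hℓX, hSℓ.trans (Finset.subset_insert _ _), hcl⟩
  have := hmax _ hmem
  rw [Finset.card_insert_of_notMem hqℓ] at this
  omega

end PlaneGeom

namespace PlaneGeom
variable {V : Type} [Fintype V] [DecidableEq V] {G : PlaneGeom V}

/-- Lift a line of `A` to a line of `insert p A` with the same trace on `A`. -/
lemma line_lift {A : Finset V} {p : V} (hpA : p ∉ A) {m : Finset V}
    (hm : G.IsLine A m) :
    ∃ ℓ, G.IsLine (insert p A) ℓ ∧ ℓ ∩ A = m := by
  have hpm : p ∉ m := fun h => hpA (hm.1 h)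
  have hmA : m ∩ A = m := Finset.inter_eq_left.mpr hm.1
  by_cases hcl : G.IsClique (insert p m)
  · refine ⟨insert p m, ⟨Finset.insert_subset_insert _ hm.1, ?_, hcl, ?_⟩, ?_⟩
    · rw [Finset.card_insert_of_notMem hpm]
      have := hm.2.1; omega
    · intro q hq hq2 hq3
      have hqp : q ≠ p := fun h => hq2 (h ▸ Finset.mem_insert_self p m)
      have hqA : q ∈ A := (Finset.mem_insert.mp hq).resolve_left hqp
      have hqm : q ∉ m := fun h => hq2 (Finset.mem_insert_of_mem h)
      exact hm.2.2.2 q hqA hqm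
        (clique_mono (Finset.insert_subset_insert _ (Finset.subset_insert _ _)) hq3)
    · rw [Finset.insert_inter_of_notMem hpA, hmA]
  · refine ⟨m, ⟨hm.1.trans (Finset.subset_insert _ _), hm.2.1, hm.2.2.1, ?_⟩, hmA⟩
    intro q hq hq2
    rcases Finset.mem_insert.mp hq with rfl | hqA
    · exact hcl
    · exact hm.2.2.2 q hqA hq2

end PlaneGeom

/-- if `A ≤ B` in `K₀`, then `A` is a `∧`-subgeometry of `B`:
no point of `B - A` lies on two distinct lines based in `A`. -/
theorem stmt_7 {V : Type} [Fintype V] [DecidableEq V] (G : PlaneGeom V)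
    (A B : Finset V) (hB : G.InK0 B) (hAB : G.Strong A B) :
    ∀ p ∈ B \ A, ∀ ℓ₁ ℓ₂ : Finset V, G.IsLine B ℓ₁ → G.IsLine B ℓ₂ →
      BasedIn ℓ₁ A → BasedIn ℓ₂ A → p ∈ ℓ₁ → p ∈ ℓ₂ → ℓ₁ = ℓ₂ := by
  classical
  intro p hp ℓ₁ ℓ₂ h1 h2 hb1 hb2 hp1 hp2
  by_contra hne
  obtain ⟨hpB, hpA⟩ := Finset.mem_sdiff.mp hp
  set X := insert p A with hX
  have hAX : A ⊆ X := Finset.subset_insert _ _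
  have hXB : X ⊆ B := Finset.insert_subset hpB hAB.1
  have hmemlines : ∀ ℓ : Finset V, ℓ ∈ G.lines X ↔ G.IsLine X ℓ := by
    intro ℓ
    simp [PlaneGeom.lines, Finset.mem_filter]
  have hmemlinesA : ∀ m : Finset V, m ∈ G.lines A ↔ G.IsLine A m := by
    intro m
    simp [PlaneGeom.lines, Finset.mem_filter]
  -- trace facts for lines of X
  have htrace : ∀ ℓ ∈ G.lines X, ((ℓ ∩ A).card : ℤ) = (ℓ.card : ℤ) - (if p ∈ ℓ then 1 else 0) := by
    intro ℓ hℓ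
    have hℓX : ℓ ⊆ X := ((hmemlines ℓ).mp hℓ).1
    by_cases hpℓ : p ∈ ℓ
    · rw [if_pos hpℓ]
      have he : ℓ ∩ A = ℓ.erase p := by
        apply Finset.Subset.antisymm
        · intro x hx
          obtain ⟨hx1, hx2⟩ := Finset.mem_inter.mp hx
          exact Finset.mem_erase.mpr ⟨fun h => hpA (h ▸ hx2), hx1⟩
        · intro x hx
          obtain ⟨hx1, hx2⟩ := Finset.mem_erase.mp hx
          rcases Finset.mem_insert.mp (hℓX hx2) with rfl | hxa
          · exact absurd rfl hx1
          · exact Finset.mem_inter.mpr ⟨hx2, hxa⟩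
      rw [he, Finset.card_erase_of_mem hpℓ]
      have : 1 ≤ ℓ.card := Finset.card_pos.mpr ⟨p, hpℓ⟩
      push_cast [Nat.cast_sub this]
      ring
    · rw [if_neg hpℓ]
      have he : ℓ ∩ A = ℓ := Finset.inter_eq_left.mpr (fun x hx => by
        rcases Finset.mem_insert.mp (hℓX hx) with rfl | hxa
        · exact absurd hx hpℓ
        · exact hxa)
      rw [he]; ring
  have htrace2 : ∀ ℓ ∈ G.lines X, (2 : ℤ) ≤ ((ℓ ∩ A).card : ℤ) := by
    intro ℓ hℓ
    have h3 : 3 ≤ ℓ.card := ((hmemlines ℓ).mp hℓ).2.1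
    have := htrace ℓ hℓ
    by_cases hpℓ : p ∈ ℓ <;> simp [hpℓ] at this <;> omega
  -- lift lines of A into lines of X
  have hlift : ∀ m ∈ G.lines A, ∃ ℓ, G.IsLine X ℓ ∧ ℓ ∩ A = m := by
    intro m hm
    exact PlaneGeom.line_lift hpA ((hmemlinesA m).mp hm)
  choose! F hF1 hF2 using hlift
  have key1 : ∑ m ∈ G.lines A, ((m.card : ℤ) - 2) ≤
      ∑ ℓ ∈ G.lines X, (((ℓ ∩ A).card : ℤ) - 2) := by
    have hinj : Set.InjOn F (G.lines A) := by
      intro m1 hm1 m2 hm2 h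
      rw [← hF2 m1 hm1, ← hF2 m2 hm2, h]
    have e1 : ∑ m ∈ G.lines A, ((m.card : ℤ) - 2) =
        ∑ ℓ ∈ (G.lines A).image F, (((ℓ ∩ A).card : ℤ) - 2) := by
      rw [Finset.sum_image (fun x hx y hy h => hinj hx hy h)]
      apply Finset.sum_congr rfl
      intro m hm
      rw [hF2 m hm]
    rw [e1]
    apply Finset.sum_le_sum_of_subset_of_nonneg
    · intro ℓ hℓ
      obtain ⟨m, hm, rfl⟩ := Finset.mem_image.mp hℓ
      exact (hmemlines _).mpr (hF1 m hm)
    · intro ℓ hℓ _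
      have := htrace2 ℓ hℓ
      omega
  -- two distinct lines of X through p
  have hb1n : 2 ≤ (ℓ₁ ∩ A).card := hb1
  have hb2n : 2 ≤ (ℓ₂ ∩ A).card := hb2
  obtain ⟨a, ha, b, hb, hab⟩ := Finset.one_lt_card.mp hb1n
  have hcex : ∃ c ∈ ℓ₂ ∩ A, c ∉ ℓ₁ := by
    by_contra hcon
    push_neg at hcon
    obtain ⟨c, hc, d, hd, hcd⟩ := Finset.one_lt_card.mp hb2n
    exact hcd (PlaneGeom.line_inter h1 h2 hne (hcon c hc) (Finset.mem_inter.mp hc).1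
      (hcon d hd) (Finset.mem_inter.mp hd).1)
  obtain ⟨c, hc, hc1⟩ := hcex
  have hpint1 : p ∉ ℓ₁ ∩ A := fun h => hpA (Finset.mem_inter.mp h).2
  have hpint2 : p ∉ ℓ₂ ∩ A := fun h => hpA (Finset.mem_inter.mp h).2
  have hS1X : insert p (ℓ₁ ∩ A) ⊆ X :=
    Finset.insert_subset (Finset.mem_insert_self _ _)
      ((Finset.inter_subset_right).trans hAX)
  have hS2X : insert p (ℓ₂ ∩ A) ⊆ X :=
    Finset.insert_subset (Finset.mem_insert_self _ _)
      ((Finset.inter_subset_right).trans hAX)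
  have hS1cl : G.IsClique (insert p (ℓ₁ ∩ A)) :=
    PlaneGeom.clique_mono (Finset.insert_subset hp1 Finset.inter_subset_left) h1.2.2.1
  have hS2cl : G.IsClique (insert p (ℓ₂ ∩ A)) :=
    PlaneGeom.clique_mono (Finset.insert_subset hp2 Finset.inter_subset_left) h2.2.2.1
  have hS1c : 3 ≤ (insert p (ℓ₁ ∩ A)).card := by
    rw [Finset.card_insert_of_notMem hpint1]; omega
  have hS2c : 3 ≤ (insert p (ℓ₂ ∩ A)).card := by
    rw [Finset.card_insert_of_notMem hpint2]; omega
  obtain ⟨L₁, hL1, hSL1⟩ := PlaneGeom.exists_line_ext hS1X hS1cl hS1c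
  obtain ⟨L₂, hL2, hSL2⟩ := PlaneGeom.exists_line_ext hS2X hS2cl hS2c
  have hpL1 : p ∈ L₁ := hSL1 (Finset.mem_insert_self _ _)
  have hpL2 : p ∈ L₂ := hSL2 (Finset.mem_insert_self _ _)
  have hL12 : L₁ ≠ L₂ := by
    intro heq
    have haL : a ∈ L₁ := hSL1 (Finset.mem_insert_of_mem ha)
    have hbL : b ∈ L₁ := hSL1 (Finset.mem_insert_of_mem hb)
    have hcL : c ∈ L₁ := heq ▸ hSL2 (Finset.mem_insert_of_mem hc)
    have ha1 : a ∈ ℓ₁ := (Finset.mem_inter.mp ha).1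
    have hb1' : b ∈ ℓ₁ := (Finset.mem_inter.mp hb).1
    have hbc : b ≠ c := fun h => hc1 (h ▸ hb1')
    have hac : a ≠ c := fun h => hc1 (h ▸ ha1)
    have hR : G.R a b c := hL1.2.2.1 a haL b hbL c hcL hab hbc hac
    exact h1.2.2.2 c (hAB.1 (Finset.mem_inter.mp hc).2) hc1
      (PlaneGeom.ext_clique h1.2.2.1 ha1 hb1' hab hR hc1)
  have key2 : (2 : ℤ) ≤ ∑ ℓ ∈ G.lines X, (if p ∈ ℓ then (1 : ℤ) else 0) := by
    have hsub : {L₁, L₂} ⊆ (G.lines X).filter (fun ℓ => p ∈ ℓ) := by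
      intro ℓ hℓ
      rcases Finset.mem_insert.mp hℓ with rfl | hℓ
      · exact Finset.mem_filter.mpr ⟨(hmemlines _).mpr hL1, hpL1⟩
      · rw [Finset.mem_singleton.mp hℓ]
        exact Finset.mem_filter.mpr ⟨(hmemlines _).mpr hL2, hpL2⟩
    have hcard : 2 ≤ ((G.lines X).filter (fun ℓ => p ∈ ℓ)).card := by
      calc 2 = ({L₁, L₂} : Finset (Finset V)).card := (Finset.card_pair hL12).symm
      _ ≤ _ := Finset.card_le_card hsub
    rw [← Finset.sum_filter]
    simp only [Finset.sum_const, nsmul_eq_mul, mul_one]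
    exact_mod_cast hcard
  -- combine
  have hsplit : ∑ ℓ ∈ G.lines X, ((ℓ.card : ℤ) - 2) =
      ∑ ℓ ∈ G.lines X, ((((ℓ ∩ A).card : ℤ) - 2) + (if p ∈ ℓ then (1 : ℤ) else 0)) := by
    apply Finset.sum_congr rfl
    intro ℓ hℓ
    have := htrace ℓ hℓ
    by_cases hpℓ : p ∈ ℓ <;> simp [hpℓ] at this ⊢ <;> omega
  have hXcard : (X.card : ℤ) = (A.card : ℤ) + 1 := by
    rw [hX, Finset.card_insert_of_notMem hpA]; push_cast; ring
  have hdX : G.delta X ≤ G.delta A - 1 := by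
    unfold PlaneGeom.delta
    rw [hsplit, Finset.sum_add_distrib, hXcard]
    linarith [key1, key2]
  have := hAB.2 X hAX hXB
  linarith
end
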